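/- Let π ∈ S_d with π(j+1) = j and π(j) ≠ j+1 for some 1 ≤ j < d. Define π''' on {1,...,d}∖{j} by π'''(j+1) = π(j) and π'''(k) = π(k) for other k. Then aex(π''') + 1 ≤ aex(π). -/

import Mathlib

/-! Conjugating by the transposition `(j j+1)` carries the antiexceedances of `π'''`, together
with `j`, injectively into the antiexceedances of `π`: `j ↦ j+1` is one since `π(j+1) = j`, and
`j+1 ↦ j` stays one because `π(j) ≤ j+1` with `π(j) ≠ j+1` forces `π(j) ≤ j`. -/

/-- The number of antiexceedances of a permutation: indices `i` with `π i ≤ i`. -/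
def aex {d : ℕ} (π : Equiv.Perm (Fin d)) : ℕ :=
  (Finset.univ.filter (fun i => π i ≤ i)).card

open Finset

lemma Fin.le_of_lt_of_val_eq_succ {d : ℕ} {x a b : Fin d} (hb : (b : ℕ) = a + 1)
    (h : x < b) : x ≤ a := by
  rw [Fin.le_def]
  rw [Fin.lt_def] at h
  omega

section

variable {d : ℕ} {π : Equiv.Perm (Fin d)} {j j1 : Fin d}

lemma apply_swap_left_le_swap_left (hj1 : (j1 : ℕ) = (j : ℕ) + 1) (hπj1 : π j1 = j) :
    π (Equiv.swap j j1 j) ≤ Equiv.swap j j1 j := by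
  rw [Equiv.swap_apply_left, hπj1, Fin.le_def]
  omega

lemma apply_swap_le_swap_of_ne_left (hj1 : (j1 : ℕ) = (j : ℕ) + 1) (hnice : π j ≠ j1)
    {k : Fin d} (hkj : k ≠ j) (hk : (if k = j1 then π j else π k) ≤ k) :
    π (Equiv.swap j j1 k) ≤ Equiv.swap j j1 k := by
  by_cases hkj1 : k = j1
  · subst hkj1
    rw [if_pos rfl] at hk
    rw [Equiv.swap_apply_right]
    exact Fin.le_of_lt_of_val_eq_succ hj1 (lt_of_le_of_ne hk hnice)
  · rw [if_neg hkj1] at hk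
    rwa [Equiv.swap_apply_of_ne_of_ne hkj hkj1]

end

/-- Given `π ∈ S_d` with `π(j+1) = j` and `π(j) ≠ j+1`, the permutation `π'''`
of `{1,…,d}∖{j}` defined by `π'''(j+1) = π(j)` and `π'''(k) = π(k)` otherwise
satisfies `aex(π''') + 1 ≤ aex(π)`. -/
theorem aex_pi'''_succ_le (d : ℕ) (π : Equiv.Perm (Fin d)) (j j1 : Fin d)
    (hj1 : (j1 : ℕ) = (j : ℕ) + 1)
    (hπj1 : π j1 = j) (hnice : π j ≠ j1) :
    ((Finset.univ.erase j).filter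
        (fun k => (if k = j1 then π j else π k) ≤ k)).card + 1
      ≤ aex π := by
  set S := (univ.erase j).filter (fun k => (if k = j1 then π j else π k) ≤ k)
  have hjS : j ∉ S := fun h => (mem_erase.mp (mem_filter.mp h).1).1 rfl
  have hsub :
      (insert j S).map (Equiv.swap j j1).toEmbedding ⊆ univ.filter (fun i => π i ≤ i) := by
    intro i hi
    obtain ⟨k, hk, rfl⟩ := mem_map.mp hi
    refine mem_filter.mpr ⟨mem_univ _, ?_⟩
    rcases mem_insert.mp hk with rfl | hkS
    · exact apply_swap_left_le_swap_left hj1 hπj1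
    · obtain ⟨hk_erase, hk_le⟩ := mem_filter.mp hkS
      exact apply_swap_le_swap_of_ne_left hj1 hnice (ne_of_mem_erase hk_erase) hk_le
  calc S.card + 1 = ((insert j S).map (Equiv.swap j j1).toEmbedding).card := by
        rw [card_map, card_insert_of_notMem hjS]
    _ ≤ aex π := card_le_card hsub
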